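/- Let m ≥ 1, let d₁,…,d_m and ν₁,…,ν_{m−1} be positive real numbers, and let b₁,…,b_m be nonnegative real numbers. Define the m×m real matrices V and F by: V_{ii} = d_i, V_{i,i−1} = −ν_{i−1} for 2 ≤ i ≤ m, V_{ij} = 0 otherwise; F_{1j} = b_j for 1 ≤ j ≤ m, and F_{ij} = 0 for i ≥ 2. Set σ := Σ_{j=1}^m b_j (Π_{k=1}^{j−1} ν_k)/(Π_{k=1}^{j} d_k). Then every row of FV⁻¹ except the first is zero, the (1,1)-entry of FV⁻¹ equals σ, the eigenvalues of FV⁻¹ are exactly σ and 0 (the characteristic polynomial is λ^{m−1}(λ − σ) up to sign), and the spectral radius of V⁻¹F equals σ. -/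

import Mathlib

/-!
`F` has a single nonzero row, so `F V⁻¹` is the rank-one matrix `e₁ (bᵀ V⁻¹)`; its characteristic
polynomial is therefore `λ^{m-1} (λ - σ)` with `σ` its `(1,1)` entry. That entry is `bᵀ w` where
`w` is the first column of `V⁻¹`, found by forward substitution in the bidiagonal system
`V w = e₁`: `w_j = ∏_{k<j} ν_k / ∏_{k≤j} d_k`. Finally `V⁻¹ F` and `F V⁻¹` share their
characteristic polynomial, and `σ ≥ 0`, so the spectral radius is `σ`.
-/

/-- The spectral radius of a real square matrix: the maximum modulus of the
complex roots of its characteristic polynomial (expressed as an `sSup`). -/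
noncomputable def matSpecRad {m : ℕ} (A : Matrix (Fin m) (Fin m) ℝ) : ℝ :=
  sSup {t : ℝ | ∃ μ : ℂ, ((A.map Complex.ofReal).charpoly).IsRoot μ ∧ t = ‖μ‖}

open Polynomial Finset Matrix

namespace Matrix

variable {ι R : Type*} [DecidableEq ι] [CommRing R]

lemma eq_vecMulVec_single_of_row_eq_zero {A : Matrix ι ι R} {i₀ : ι}
    (hA : ∀ i ≠ i₀, A i = 0) : A = vecMulVec (Pi.single i₀ 1) (A i₀) := by
  ext i j
  by_cases h : i = i₀
  · subst h
    simp [vecMulVec_apply]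
  · simp [vecMulVec_apply, h, hA i h]

theorem charpoly_of_row_eq_zero [Fintype ι] {A : Matrix ι ι R} {i₀ : ι}
    (hA : ∀ i ≠ i₀, A i = 0) :
    A.charpoly = X ^ (Fintype.card ι - 1) * (X - C (A i₀ i₀)) := by
  obtain ⟨n, hn⟩ : ∃ n, Fintype.card ι = n + 1 :=
    Nat.exists_eq_add_of_le' (Fintype.card_pos_iff.mpr ⟨i₀⟩)
  rw [congrArg charpoly (eq_vecMulVec_single_of_row_eq_zero hA), charpoly_vecMulVec,
    single_one_dotProduct, hn, Nat.add_sub_cancel, smul_eq_C_mul]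
  ring

end Matrix

theorem matSpecRad_eq_of_charpoly_eq {m n : ℕ} {A : Matrix (Fin m) (Fin m) ℝ} {s : ℝ}
    (hA : A.charpoly = X ^ n * (X - C s)) (hs : 0 ≤ s) : matSpecRad A = s := by
  have hcharpoly : (A.map Complex.ofReal).charpoly = X ^ n * (X - C (s : ℂ)) := by
    rw [show A.map Complex.ofReal = A.map Complex.ofRealHom from rfl, charpoly_map, hA]
    simp
  refine IsGreatest.csSup_eq ⟨⟨s, by simp [hcharpoly], by simp [abs_of_nonneg hs]⟩, ?_⟩
  rintro t ⟨μ, hμ, rfl⟩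
  simp only [hcharpoly, IsRoot, eval_mul, eval_pow, eval_X, eval_sub, eval_C, mul_eq_zero,
    pow_eq_zero_iff', sub_eq_zero] at hμ
  rcases hμ with ⟨rfl, -⟩ | rfl
  · simpa using hs
  · simp [abs_of_nonneg hs]

section LowerBidiagonal

variable {K : Type*} [Field K] {m : ℕ} (d ν : ℕ → K)

def lowerBidiagonal : Matrix (Fin m) (Fin m) K :=
  Matrix.of fun i j => if i = j then d i else if (j : ℕ) + 1 = i then -ν j else 0

lemma isLowerTriangular_lowerBidiagonal : (lowerBidiagonal (m := m) d ν).IsLowerTriangular := by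
  intro i j hij
  have hij : (i : ℕ) < j := hij
  simp only [lowerBidiagonal, of_apply, Fin.ext_iff]
  rw [if_neg (by omega), if_neg (by omega)]

lemma det_lowerBidiagonal : (lowerBidiagonal (m := m) d ν).det = ∏ i : Fin m, d i := by
  rw [det_of_isLowerTriangular _ (isLowerTriangular_lowerBidiagonal d ν)]
  simp [lowerBidiagonal]

lemma lowerBidiagonal_mulVec_apply_zero (w : ℕ → K) (hm : 0 < m) :
    (lowerBidiagonal d ν *ᵥ fun j : Fin m => w j) ⟨0, hm⟩ = d 0 * w 0 := by
  rw [mulVec, dotProduct, sum_eq_single ⟨0, hm⟩]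
  · simp [lowerBidiagonal]
  · intro k _ hk
    simp [lowerBidiagonal, Ne.symm hk]
  · simp

lemma lowerBidiagonal_mulVec_apply_succ (w : ℕ → K) (k : ℕ) (hk : k + 1 < m) :
    (lowerBidiagonal d ν *ᵥ fun j : Fin m => w j) ⟨k + 1, hk⟩ =
      d (k + 1) * w (k + 1) - ν k * w k := by
  have hk' : k < m := by omega
  rw [mulVec, dotProduct,
    sum_eq_add ⟨k + 1, hk⟩ ⟨k, hk'⟩ (by simp [Fin.ext_iff])]
  · simp [lowerBidiagonal, Fin.ext_iff]
    ring
  · intro j _ hj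
    simp only [ne_eq, Fin.ext_iff] at hj
    simp only [lowerBidiagonal, of_apply, Fin.ext_iff]
    rw [if_neg (by omega), if_neg (by omega), zero_mul]
  all_goals simp

def lowerBidiagonalInvFirstCol (k : ℕ) : K := (∏ l ∈ range k, ν l) / ∏ l ∈ range (k + 1), d l

variable {d ν} (hd : ∀ i < m, d i ≠ 0) (hm : 0 < m)
include hd

lemma lowerBidiagonal_mulVec_invFirstCol :
    lowerBidiagonal d ν *ᵥ (fun k : Fin m => lowerBidiagonalInvFirstCol d ν k) =
      Pi.single ⟨0, hm⟩ 1 := by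
  have hprod : ∀ k < m, ∏ l ∈ range (k + 1), d l ≠ 0 := fun k hk =>
    prod_ne_zero_iff.mpr fun l hl => hd l (by grind)
  ext ⟨i, hi⟩
  cases i with
  | zero =>
    rw [lowerBidiagonal_mulVec_apply_zero, lowerBidiagonalInvFirstCol, Pi.single_eq_same]
    simp [hd 0 hm]
  | succ k =>
    rw [lowerBidiagonal_mulVec_apply_succ, Pi.single_eq_of_ne (by simp [Fin.ext_iff]),
      lowerBidiagonalInvFirstCol, lowerBidiagonalInvFirstCol, prod_range_succ,
      prod_range_succ _ (k + 1)]
    field_simp [hd (k + 1) hi, hprod k (by omega)]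
    ring

lemma lowerBidiagonal_inv_apply_zero (k : Fin m) :
    (lowerBidiagonal d ν)⁻¹ k ⟨0, hm⟩ = lowerBidiagonalInvFirstCol d ν k := by
  have hdet : IsUnit (lowerBidiagonal d ν : Matrix (Fin m) (Fin m) K).det := by
    rw [det_lowerBidiagonal]
    exact isUnit_iff_ne_zero.mpr (prod_ne_zero_iff.mpr fun i _ => hd i i.is_lt)
  calc (lowerBidiagonal d ν)⁻¹ k ⟨0, hm⟩
      = ((lowerBidiagonal d ν)⁻¹ *ᵥ Pi.single ⟨0, hm⟩ 1) k := by simp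
    _ = lowerBidiagonalInvFirstCol d ν k := by
      rw [← lowerBidiagonal_mulVec_invFirstCol hd hm, mulVec_mulVec, nonsing_inv_mul _ hdet,
        one_mulVec]

end LowerBidiagonal

/-- With `V` lower bidiagonal (`V_{ii} = d_i`,
`V_{i,i−1} = −ν_{i−1}`) and `F` having first row `(b₁,…,b_m)` and all other rows
zero (0-based indices: Lean index `i` corresponds to math index `i+1`), set
`σ := Σ_j b_j (Π_{k=1}^{j−1} ν_k)/(Π_{k=1}^{j} d_k)`.  Then every row of `F V⁻¹`
except the first is zero, `(F V⁻¹)_{11} = σ`, the characteristic polynomial of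
`F V⁻¹` is `λ^{m−1}(λ − σ)` (so the eigenvalues are exactly `σ` and `0`), and
the spectral radius of `V⁻¹ F` equals `σ`. -/
theorem stmt7 {m : ℕ} (hm : 1 ≤ m) (d ν b : ℕ → ℝ)
    (hd : ∀ i < m, 0 < d i) (hν : ∀ i, i + 1 < m → 0 < ν i)
    (hb : ∀ i < m, 0 ≤ b i)
    (V F : Matrix (Fin m) (Fin m) ℝ)
    (hV : ∀ i j : Fin m, V i j =
      if i = j then d i
      else if (j : ℕ) + 1 = (i : ℕ) then -ν j
      else 0)
    (hF : ∀ i j : Fin m, F i j = if (i : ℕ) = 0 then b j else 0)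
    (σ : ℝ)
    (hσ : σ = ∑ j : Fin m,
      b j * (∏ k ∈ Finset.range j, ν k) / ∏ k ∈ Finset.range ((j : ℕ) + 1), d k) :
    (∀ i : Fin m, (i : ℕ) ≠ 0 → ∀ j : Fin m, (F * V⁻¹) i j = 0) ∧
    (F * V⁻¹) ⟨0, hm⟩ ⟨0, hm⟩ = σ ∧
    (F * V⁻¹).charpoly = Polynomial.X ^ (m - 1) * (Polynomial.X - Polynomial.C σ) ∧
    matSpecRad (V⁻¹ * F) = σ := by
  have hV_eq : V = lowerBidiagonal d ν := Matrix.ext hV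
  have hrows : ∀ i : Fin m, (i : ℕ) ≠ 0 → (F * V⁻¹) i = 0 := by
    intro i hi
    ext j
    simp [mul_apply, hF, hi]
  have hcorner : (F * V⁻¹) ⟨0, hm⟩ ⟨0, hm⟩ = σ := by
    simp only [hV_eq, mul_apply, lowerBidiagonal_inv_apply_zero (fun i hi => (hd i hi).ne') hm, hF,
      if_pos, lowerBidiagonalInvFirstCol, hσ, mul_div_assoc]
  have hcharpoly := charpoly_of_row_eq_zero (i₀ := ⟨0, hm⟩)
    (fun i hi => hrows i fun h => hi (Fin.ext h))
  rw [hcorner, Fintype.card_fin] at hcharpoly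
  have hσ_nonneg : 0 ≤ σ := hσ ▸ sum_nonneg fun j _ =>
    div_nonneg (mul_nonneg (hb j j.is_lt) (prod_nonneg fun k hk => (hν k (by grind)).le))
      (prod_nonneg fun k hk => (hd k (by grind)).le)
  exact ⟨fun i hi j => by rw [hrows i hi, Pi.zero_apply], hcorner, hcharpoly,
    matSpecRad_eq_of_charpoly_eq (charpoly_mul_comm F V⁻¹ ▸ hcharpoly) hσ_nonneg⟩
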